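/- arXiv:math/0111277 — 8 statements merged into one kernel-verified Lean document; each statement's English description precedes it below -/
import Mathlib

section
/- Let R be a commutative ring and f : N → M an R-linear map between projective R-modules. Then f is Fredholm if and only if there exist finitely generated projective R-modules Q and P together with an R-linear isomorphism ẽ : N ⊕ Q → M ⊕ P such that f equals the composition of the canonical inclusion N → N ⊕ Q, the isomorphism ẽ, and the canonical projection M ⊕ P → M. -/
universe u

/-- A linear map has finite-type image if its image is contained in a finitely
generated submodule. -/
def HasFiniteTypeImage {R A B : Type*} [CommRing R] [AddCommGroup A] [Module R A]
    [AddCommGroup B] [Module R B] (h : A →ₗ[R] B) : Prop :=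
  ∃ S : Submodule R B, S.FG ∧ LinearMap.range h ≤ S

/-- A linear map `f : N → M` is Fredholm if it is invertible modulo maps with
finite-type image. -/
def IsFredholm {R N M : Type*} [CommRing R] [AddCommGroup N] [Module R N]
    [AddCommGroup M] [Module R M] (f : N →ₗ[R] M) : Prop :=
  ∃ g : M →ₗ[R] N, HasFiniteTypeImage (f ∘ₗ g - LinearMap.id) ∧
    HasFiniteTypeImage (g ∘ₗ f - LinearMap.id)

/-! If `g` inverts `f` up to maps of finite-type image, projectivity of `M` lets the defect
`f g - 1` factor as `j u` through a finite free module `Rⁿ`, and then `[f j] : N ⊕ Rⁿ → M` is a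
split surjection with section `ψ = (g, -u)`. Its kernel `P` is a direct summand of `N ⊕ Rⁿ`, hence
projective, and it is finitely generated because it is the image, under `ψ [f j] - 1`, of the
finitely generated submodule containing the image of that map. Thus `N ⊕ Rⁿ ≅ M ⊕ P`.
Conversely, the `M`-corners of an isomorphism `N ⊕ Q ≅ M ⊕ P` and of its inverse are inverse to
each other up to maps factoring through `Q` and `P`. -/

open LinearMap

namespace HasFiniteTypeImage

variable {R A B C : Type*} [CommRing R] [AddCommGroup A] [Module R A]
  [AddCommGroup B] [Module R B] [AddCommGroup C] [Module R C]

lemma of_finite [Module.Finite R A] (h : A →ₗ[R] B) : HasFiniteTypeImage h :=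
  ⟨_, Submodule.fg_range h, le_rfl⟩

lemma comp {h : A →ₗ[R] B} (hh : HasFiniteTypeImage h) (k : C →ₗ[R] A) :
    HasFiniteTypeImage (h ∘ₗ k) :=
  let ⟨S, hS, hhS⟩ := hh
  ⟨S, hS, (range_comp_le_range k h).trans hhS⟩

lemma add {h h' : A →ₗ[R] B} (hh : HasFiniteTypeImage h) (hh' : HasFiniteTypeImage h') :
    HasFiniteTypeImage (h + h') := by
  obtain ⟨S, hS, hhS⟩ := hh
  obtain ⟨S', hS', hhS'⟩ := hh'
  refine ⟨S ⊔ S', hS.sup hS', ?_⟩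
  rintro _ ⟨x, rfl⟩
  exact Submodule.add_mem_sup (hhS ⟨x, rfl⟩) (hhS' ⟨x, rfl⟩)

lemma of_fst_comp [Module.Finite R C] {h : A →ₗ[R] B × C}
    (hh : HasFiniteTypeImage (fst R B C ∘ₗ h)) : HasFiniteTypeImage h := by
  obtain ⟨S, hS, hhS⟩ := hh
  exact ⟨S.prod ⊤, hS.prod Module.Finite.fg_top, by
    rintro _ ⟨x, rfl⟩; exact ⟨hhS ⟨x, rfl⟩, trivial⟩⟩

lemma exists_comp_eq [Module.Projective R A] {h : A →ₗ[R] B} (hh : HasFiniteTypeImage h) :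
    ∃ (n : ℕ) (j : (Fin n → R) →ₗ[R] B) (u : A →ₗ[R] Fin n → R), j ∘ₗ u = h := by
  obtain ⟨S, hS, hhS⟩ := hh
  have : Module.Finite R S := Module.Finite.iff_fg.mpr hS
  obtain ⟨n, p, hp⟩ := Module.Finite.exists_fin' R S
  obtain ⟨u, hu⟩ :=
    Module.projective_lifting_property p (h.codRestrict S fun x => hhS ⟨x, rfl⟩) hp
  exact ⟨n, S.subtype ∘ₗ p, u, by rw [comp_assoc, hu]; rfl⟩

end HasFiniteTypeImage

section SplitSurjection

variable {R X M : Type*} [CommRing R] [AddCommGroup X] [Module R X] [AddCommGroup M] [Module R M]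
  {φ : X →ₗ[R] M} {ψ : M →ₗ[R] X}

lemma fg_ker_of_comp_eq_id (hφψ : φ ∘ₗ ψ = LinearMap.id)
    (hψφ : HasFiniteTypeImage (ψ ∘ₗ φ - LinearMap.id)) : (ker φ).FG := by
  obtain ⟨W, hW, hψφW⟩ := hψφ
  suffices ker φ = W.map (ψ ∘ₗ φ - LinearMap.id) from this ▸ hW.map _
  apply le_antisymm
  · intro x hx
    have hx' : (ψ ∘ₗ φ - LinearMap.id : X →ₗ[R] X) (-x) = x := by simp [mem_ker.mp hx]
    exact ⟨-x, hψφW ⟨x, by simp [mem_ker.mp hx]⟩, hx'⟩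
  · rintro _ ⟨y, -, rfl⟩
    simp [mem_ker, ← comp_apply φ ψ, hφψ]

lemma exists_equiv_prod_ker_of_comp_eq_id (hφψ : φ ∘ₗ ψ = LinearMap.id) :
    ∃ e : X ≃ₗ[R] M × ker φ, fst R M (ker φ) ∘ₗ e.toLinearMap = φ := by
  let e := (exact_subtype_ker_map φ).splitSurjectiveEquiv (ker φ).injective_subtype ⟨ψ, hφψ⟩
  exact ⟨e.1.trans (LinearEquiv.prodComm R _ _), by
    conv_rhs => rw [e.2.2]
    rfl⟩

end SplitSurjection

section Stabilization

variable {R N M : Type*} [CommRing R] [AddCommGroup N] [Module R N] [AddCommGroup M] [Module R M]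

lemma range_fst_comp_inl_comp_symm_sub_id_le {Q P : Type*} [AddCommGroup Q] [Module R Q]
    [AddCommGroup P] [Module R P] (e : (N × Q) ≃ₗ[R] (M × P)) :
    range ((fst R M P ∘ₗ e.toLinearMap ∘ₗ inl R N Q) ∘ₗ
        (fst R N Q ∘ₗ e.symm.toLinearMap ∘ₗ inl R M P) - LinearMap.id) ≤
      range (fst R M P ∘ₗ e.toLinearMap ∘ₗ inr R N Q) := by
  rintro _ ⟨m, rfl⟩
  set v := e.symm (m, 0)
  have hv : e (v.1, 0) + e (0, v.2) = (m, 0) := by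
    rw [← map_add, Prod.mk_add_mk, add_zero, zero_add, e.apply_symm_apply]
  have h : (e (v.1, 0)).1 + (e (0, v.2)).1 = m := congrArg Prod.fst hv
  have hneg : e (0, -v.2) = -e (0, v.2) := by rw [← map_neg, Prod.neg_mk, neg_zero]
  refine ⟨-v.2, ?_⟩
  show (e (0, -v.2)).1 = (e (v.1, 0)).1 - m
  rw [hneg, Prod.fst_neg, ← h]
  abel

theorem isFredholm_fst_comp_comp_inl {Q P : Type*} [AddCommGroup Q] [Module R Q]
    [Module.Finite R Q] [AddCommGroup P] [Module R P] [Module.Finite R P]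
    (e : (N × Q) ≃ₗ[R] (M × P)) :
    IsFredholm (fst R M P ∘ₗ e.toLinearMap ∘ₗ inl R N Q) := by
  have h := range_fst_comp_inl_comp_symm_sub_id_le e.symm
  rw [e.symm_symm] at h
  exact ⟨fst R N Q ∘ₗ e.symm.toLinearMap ∘ₗ inl R M P,
    ⟨_, Submodule.fg_range _, range_fst_comp_inl_comp_symm_sub_id_le e⟩,
    ⟨_, Submodule.fg_range _, h⟩⟩

theorem IsFredholm.exists_equiv_prod [Module.Projective R N] [Module.Projective R M]
    {f : N →ₗ[R] M} (hf : IsFredholm f) :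
    ∃ (n : ℕ) (P : Submodule R (N × (Fin n → R))), Module.Finite R P ∧ Module.Projective R P ∧
      ∃ e : (N × (Fin n → R)) ≃ₗ[R] (M × P), f = fst R M P ∘ₗ e.toLinearMap ∘ₗ inl R N _ := by
  obtain ⟨g, hfg, hgf⟩ := hf
  obtain ⟨n, j, u, hju⟩ := hfg.exists_comp_eq
  set φ := f.coprod j
  set ψ := g.prod (-u)
  have hφψ : φ ∘ₗ ψ = LinearMap.id := by
    rw [coprod_comp_prod, comp_neg, hju]
    abel
  have hψφ : HasFiniteTypeImage (ψ ∘ₗ φ - LinearMap.id) := by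
    refine HasFiniteTypeImage.of_fst_comp ?_
    have hfst : fst R N _ ∘ₗ (ψ ∘ₗ φ - LinearMap.id) =
        (g ∘ₗ f - LinearMap.id) ∘ₗ fst R N _ + (g ∘ₗ j) ∘ₗ snd R N _ := by
      ext <;> simp [φ, ψ]
    rw [hfst]
    exact (hgf.comp _).add ((HasFiniteTypeImage.of_finite _).comp _)
  obtain ⟨e, he⟩ := exists_equiv_prod_ker_of_comp_eq_id hφψ
  refine ⟨n, ker φ, Module.Finite.iff_fg.mpr (fg_ker_of_comp_eq_id hφψ hψφ),
    .of_split (e.symm.toLinearMap ∘ₗ inr R M _) (snd R M _ ∘ₗ e.toLinearMap)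
      (LinearMap.ext fun _ => by simp),
    e, ?_⟩
  rw [← comp_assoc, he]
  ext; simp [φ]

end Stabilization

/-- A linear map between projective modules is Fredholm iff it can be written as the
composition of the inclusion `N → N ⊕ Q`, an isomorphism `N ⊕ Q ≅ M ⊕ P`, and the
projection `M ⊕ P → M`, where `P`, `Q` are finitely generated projective modules. -/
theorem isFredholm_iff_exists_stabilized_iso
    {R : Type u} [CommRing R] {N M : Type u} [AddCommGroup N] [Module R N]
    [AddCommGroup M] [Module R M] [Module.Projective R N] [Module.Projective R M]
    (f : N →ₗ[R] M) :
    IsFredholm f ↔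
      ∃ Q P : ModuleCat.{u} R,
        Module.Finite R Q ∧ Module.Projective R Q ∧
        Module.Finite R P ∧ Module.Projective R P ∧
        ∃ e : (N × Q) ≃ₗ[R] (M × P),
          f = (LinearMap.fst R M P) ∘ₗ (e : (N × Q) →ₗ[R] (M × P)) ∘ₗ
            (LinearMap.inl R N Q) := by
  constructor
  · intro hf
    obtain ⟨n, P, hPfin, hPproj, e, he⟩ := hf.exists_equiv_prod
    exact ⟨ModuleCat.of R (Fin n → R), ModuleCat.of R P, inferInstance, inferInstance,
      hPfin, hPproj, e, he⟩
  · rintro ⟨Q, P, hQ, -, hP, -, e, rfl⟩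
    exact isFredholm_fst_comp_comp_inl e
end

section
/- Let R be a commutative ring, I ⊆ R a nilpotent ideal, and f : N → M an R-linear map between projective R-modules. Then f is Fredholm over R if and only if the induced R/I-linear map N/IN → M/IM is Fredholm over R/I. -/
/-!
Reduction modulo `I` commutes with composition, so a quasi-inverse of `f` reduces to one of
its reduction. Conversely, since `M` is projective, a quasi-inverse of the reduction lifts to
some `g : M → N`. Then `f g - 1` reduces to a map with finite-type image, so its image lies in
`S + I M` with `S` finitely generated, and projectivity splits it as `s + t` with
`im s ⊆ S` and `im t ⊆ I M`. Since `I` is nilpotent so is `t`, hence `f g = (1 + t) + s` is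
a unit plus a map with finite-type image, which is Fredholm. The same holds for `g f`, and a
map `f` for which both `f g` and `g f` are Fredholm is itself Fredholm.
-/

open TensorProduct

open LinearMap

section FiniteTypeImage

variable {R A B C : Type*} [CommRing R] [AddCommGroup A] [Module R A]
  [AddCommGroup B] [Module R B] [AddCommGroup C] [Module R C]

lemma HasFiniteTypeImage.comp_left {h : A →ₗ[R] B} (hh : HasFiniteTypeImage h)
    (φ : B →ₗ[R] C) : HasFiniteTypeImage (φ ∘ₗ h) := by
  obtain ⟨S, hS, hle⟩ := hh
  exact ⟨S.map φ, hS.map φ, range_comp h φ ▸ Submodule.map_mono hle⟩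

lemma HasFiniteTypeImage.comp_right {h : B →ₗ[R] C} (hh : HasFiniteTypeImage h)
    (φ : A →ₗ[R] B) : HasFiniteTypeImage (h ∘ₗ φ) := by
  obtain ⟨S, hS, hle⟩ := hh
  exact ⟨S, hS, (range_comp_le_range φ h).trans hle⟩

lemma HasFiniteTypeImage.add_s3 {h₁ h₂ : A →ₗ[R] B} (hh₁ : HasFiniteTypeImage h₁)
    (hh₂ : HasFiniteTypeImage h₂) : HasFiniteTypeImage (h₁ + h₂) := by
  obtain ⟨S₁, hS₁, hle₁⟩ := hh₁
  obtain ⟨S₂, hS₂, hle₂⟩ := hh₂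
  exact ⟨S₁ ⊔ S₂, hS₁.sup hS₂, (range_add_le h₁ h₂).trans (sup_le_sup hle₁ hle₂)⟩

lemma HasFiniteTypeImage.sub {h₁ h₂ : A →ₗ[R] B} (hh₁ : HasFiniteTypeImage h₁)
    (hh₂ : HasFiniteTypeImage h₂) : HasFiniteTypeImage (h₁ - h₂) := by
  rw [sub_eq_add_neg, ← h₂.id_comp, ← neg_comp]
  exact hh₁.add_s3 (hh₂.comp_left _)

lemma HasFiniteTypeImage.baseChange (S : Type*) [CommRing S] [Algebra R S] {h : B →ₗ[R] C}
    (hh : HasFiniteTypeImage h) : HasFiniteTypeImage (h.baseChange S) := by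
  obtain ⟨T, ⟨t, rfl⟩, hle⟩ := hh
  refine ⟨(Submodule.span R (t : Set C)).baseChange S, ?_, ?_⟩
  · rw [Submodule.baseChange_span]
    exact Submodule.fg_span (t.finite_toSet.image _)
  · rw [← subtype_comp_codRestrict (f := h) _ fun b => hle ⟨b, rfl⟩, baseChange_comp]
    exact range_comp_le_range _ _

end FiniteTypeImage

section Projective

variable {R B P : Type*} [CommRing R] [AddCommGroup B] [Module R B]
  [AddCommGroup P] [Module R P] [Module.Projective R P]

lemma Module.Projective.exists_add_eq_of_range_le_sup (u : P →ₗ[R] B) {S T : Submodule R B}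
    (h : range u ≤ S ⊔ T) :
    ∃ s t : P →ₗ[R] B, s + t = u ∧ range s ≤ S ∧ range t ≤ T := by
  let σ : S × T →ₗ[R] B := S.subtype.coprod T.subtype
  have hσ : range σ = S ⊔ T := by
    rw [range_coprod, Submodule.range_subtype, Submodule.range_subtype]
  obtain ⟨v, hv⟩ := Module.projective_lifting_property σ.rangeRestrict
    (u.codRestrict _ fun p => hσ ▸ h ⟨p, rfl⟩) σ.surjective_rangeRestrict
  refine ⟨S.subtype ∘ₗ fst R S T ∘ₗ v, T.subtype ∘ₗ snd R S T ∘ₗ v, ?_, ?_, ?_⟩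
  · ext p
    exact congr(($hv p : B))
  · exact (range_comp_le_range _ _).trans (Submodule.range_subtype S).le
  · exact (range_comp_le_range _ _).trans (Submodule.range_subtype T).le

lemma Module.Projective.exists_baseChange_eq {A N : Type*} [CommRing A] [Algebra R A]
    (hA : Function.Surjective (algebraMap R A)) [AddCommGroup N] [Module R N]
    (g : A ⊗[R] P →ₗ[A] A ⊗[R] N) : ∃ g₀ : P →ₗ[R] N, g₀.baseChange A = g := by
  obtain ⟨g₀, hg₀⟩ := Module.projective_lifting_property (TensorProduct.mk R A N 1)
    (g.restrictScalars R ∘ₗ TensorProduct.mk R A P 1) (TensorProduct.mk_surjective R N A hA)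
  refine ⟨g₀, ?_⟩
  ext p
  exact congr($hg₀ p)

end Projective

section NilpotentIdeal

variable {R B C : Type*} [CommRing R] [AddCommGroup B] [Module R B]
  [AddCommGroup C] [Module R C] {I : Ideal R}

lemma TensorProduct.ker_mk_quotient_one (I : Ideal R) :
    ker (TensorProduct.mk R (R ⧸ I) C 1) = I • ⊤ := by
  rw [← quotTensorEquivQuotSMul_symm_comp_mkQ, LinearEquiv.ker_comp, Submodule.ker_mkQ]

lemma Submodule.FG.exists_fg_map_eq {D : Type*} [AddCommGroup D] [Module R D]
    {π : C →ₗ[R] D} (hπ : Function.Surjective π) {T : Submodule R D} (hT : T.FG) :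
    ∃ S : Submodule R C, S.FG ∧ S.map π = T := by
  obtain ⟨t, rfl⟩ := hT
  refine ⟨span R (Function.surjInv hπ '' t), fg_span (t.finite_toSet.image _), ?_⟩
  rw [map_span, Set.image_image]
  simp only [Function.surjInv_eq hπ, Set.image_id']

lemma HasFiniteTypeImage.exists_fg_range_le_sup_smul {h : B →ₗ[R] C}
    (hh : HasFiniteTypeImage (h.baseChange (R ⧸ I))) :
    ∃ S : Submodule R C, S.FG ∧ range h ≤ S ⊔ I • ⊤ := by
  obtain ⟨T, hT, hle⟩ := hh
  obtain ⟨S, hS, hST⟩ :=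
    (hT.restrictScalars_of_surjective Ideal.Quotient.mk_surjective).exists_fg_map_eq
      (TensorProduct.mk_surjective R C (R ⧸ I) Ideal.Quotient.mk_surjective)
  refine ⟨S, hS, ?_⟩
  rw [← TensorProduct.ker_mk_quotient_one I, ← Submodule.comap_map_eq, hST]
  rintro _ ⟨b, rfl⟩
  exact hle ⟨1 ⊗ₜ b, rfl⟩

lemma isNilpotent_of_range_le_smul_top (hI : IsNilpotent I) {t : Module.End R B}
    (ht : range t ≤ I • ⊤) : IsNilpotent t := by
  have hpow (k : ℕ) : range (t ^ k) ≤ I ^ k • ⊤ := by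
    induction k with
    | zero => simp
    | succ k ih =>
      calc range (t ^ (k + 1)) = (range (t ^ k)).map t := by
            rw [pow_succ', Module.End.mul_eq_comp, range_comp]
        _ ≤ (I ^ k • ⊤ : Submodule R B).map t := Submodule.map_mono ih
        _ = I ^ k • range t := by rw [Submodule.map_smul'', Submodule.map_top]
        _ ≤ I ^ k • I • ⊤ := smul_mono_right _ ht
        _ = I ^ (k + 1) • ⊤ := by rw [← Submodule.smul_assoc, smul_eq_mul, ← pow_succ]
  obtain ⟨n, hn⟩ := hI
  refine ⟨n, range_eq_bot.mp (le_bot_iff.mp ?_)⟩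
  simpa [hn] using hpow n

end NilpotentIdeal

section Fredholm

variable {R M : Type*} [CommRing R] [AddCommGroup M] [Module R M]

lemma IsUnit.isFredholm_add {u s : Module.End R M} (hu : IsUnit u)
    (hs : HasFiniteTypeImage s) : IsFredholm (u + s) := by
  refine ⟨↑hu.unit⁻¹, ?_, ?_⟩
  · have : (u + s) ∘ₗ ↑hu.unit⁻¹ - LinearMap.id = s ∘ₗ ↑hu.unit⁻¹ := by
      rw [← Module.End.mul_eq_comp, ← Module.End.one_eq_id, add_mul, hu.mul_val_inv,
        add_sub_cancel_left, Module.End.mul_eq_comp]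
    exact this ▸ hs.comp_right _
  · have : ↑hu.unit⁻¹ ∘ₗ (u + s) - LinearMap.id = ↑hu.unit⁻¹ ∘ₗ s := by
      rw [← Module.End.mul_eq_comp, ← Module.End.one_eq_id, mul_add, hu.val_inv_mul,
        add_sub_cancel_left, Module.End.mul_eq_comp]
    exact this ▸ hs.comp_left _

lemma isFredholm_of_hasFiniteTypeImage_baseChange_sub_id [Module.Projective R M]
    {I : Ideal R} (hI : IsNilpotent I) {a : Module.End R M}
    (ha : HasFiniteTypeImage (a.baseChange (R ⧸ I) - LinearMap.id)) : IsFredholm a := by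
  rw [← baseChange_id, ← baseChange_sub] at ha
  obtain ⟨S, hS, hle⟩ := ha.exists_fg_range_le_sup_smul
  obtain ⟨s, t, hst, hs, ht⟩ := Module.Projective.exists_add_eq_of_range_le_sup _ hle
  have hunit : IsUnit (1 + t) := (isNilpotent_of_range_le_smul_top hI ht).isUnit_one_add
  have hsplit : a = (1 + t) + s := by
    rw [add_assoc, add_comm t, hst, Module.End.one_eq_id, add_sub_cancel]
  exact hsplit ▸ hunit.isFredholm_add ⟨S, hS, hs⟩

variable {N : Type*} [AddCommGroup N] [Module R N]

lemma IsFredholm.baseChange (A : Type*) [CommRing A] [Algebra R A] {f : N →ₗ[R] M}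
    (hf : IsFredholm f) : IsFredholm (f.baseChange A) := by
  obtain ⟨g, hfg, hgf⟩ := hf
  refine ⟨g.baseChange A, ?_, ?_⟩ <;>
    rw [← baseChange_comp, ← baseChange_id, ← baseChange_sub]
  exacts [hfg.baseChange A, hgf.baseChange A]

lemma IsFredholm.of_left_right {f : N →ₗ[R] M} (g₁ g₂ : M →ₗ[R] N)
    (h₁ : HasFiniteTypeImage (g₁ ∘ₗ f - LinearMap.id))
    (h₂ : HasFiniteTypeImage (f ∘ₗ g₂ - LinearMap.id)) : IsFredholm f := by
  -- both `g₁ f g₂ - g₁` and `g₁ f g₂ - g₂` have finite-type image, hence so does `g₂ - g₁`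
  have key : g₂ ∘ₗ f - LinearMap.id =
      (g₁ ∘ₗ (f ∘ₗ g₂ - LinearMap.id) - (g₁ ∘ₗ f - LinearMap.id) ∘ₗ g₂) ∘ₗ f +
        (g₁ ∘ₗ f - LinearMap.id) := by
    ext x
    simp only [LinearMap.sub_apply, LinearMap.add_apply, comp_apply, id_apply, map_sub]
    abel
  refine ⟨g₂, h₂, key ▸ ?_⟩
  exact (((h₂.comp_left g₁).sub (h₁.comp_right g₂)).comp_right f).add_s3 h₁

lemma IsFredholm.of_comp {f : N →ₗ[R] M} {g : M →ₗ[R] N} (hfg : IsFredholm (f ∘ₗ g))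
    (hgf : IsFredholm (g ∘ₗ f)) : IsFredholm f := by
  obtain ⟨h₁, hh₁, -⟩ := hfg
  obtain ⟨h₂, -, hh₂⟩ := hgf
  exact .of_left_right (h₂ ∘ₗ g) (g ∘ₗ h₁) hh₂ hh₁

end Fredholm

/-- For a nilpotent ideal `I ⊆ R`, a linear map between projective `R`-modules is
Fredholm over `R` iff its reduction modulo `I` is Fredholm over `R/I`. -/
theorem isFredholm_iff_isFredholm_of_nilpotent
    {R : Type*} [CommRing R] (I : Ideal R) (hI : IsNilpotent I)
    {N M : Type*} [AddCommGroup N] [Module R N] [AddCommGroup M] [Module R M]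
    [Module.Projective R N] [Module.Projective R M] (f : N →ₗ[R] M) :
    IsFredholm f ↔ IsFredholm (f.baseChange (R ⧸ I)) := by
  refine ⟨IsFredholm.baseChange _, fun ⟨g, hfg, hgf⟩ => ?_⟩
  obtain ⟨g, rfl⟩ := Module.Projective.exists_baseChange_eq Ideal.Quotient.mk_surjective g
  rw [← baseChange_comp] at hfg hgf
  exact .of_comp (isFredholm_of_hasFiniteTypeImage_baseChange_sub_id hI hfg)
    (isFredholm_of_hasFiniteTypeImage_baseChange_sub_id hI hgf)
end

section
/- Let R be a Noetherian commutative ring and f : N → M an R-linear map between projective R-modules such that the cokernel of f is a finitely generated R-module and such that, for every prime ideal 𝔭 of R, the induced map N ⊗_R κ(𝔭) → M ⊗_R κ(𝔭) over the residue field κ(𝔭) has finite-dimensional kernel and cokernel. Then f is Fredholm (no local constancy of the index need be assumed). -/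
/-!
Adding a finite free module to `f` gives a surjection `f' = f + s : N × Rⁿ → M`, which splits
because `M` is projective. Its kernel `K` is then a projective direct summand of `N × Rⁿ`, so each
fiber `κ(𝔭) ⊗ K` embeds into `ker (κ(𝔭) ⊗ f')`, which is finite-dimensional since `ker (κ(𝔭) ⊗ f)`
and `κ(𝔭)ⁿ` are. Over a Noetherian ring a projective module with finite-dimensional fibers is
finitely generated: as a summand of a free module, finitely many basis vectors account for the
fibers at the finitely many minimal primes, so the remaining coordinates are nilpotent, and the
nilradical is nilpotent. With `K` finitely generated, the first component of a section of `f'` is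
a parametrix for `f`.
-/

open TensorProduct

/-- The residue field of a commutative ring at a prime ideal. -/
abbrev ResidueFieldAt {R : Type*} [CommRing R] (q : PrimeSpectrum R) : Type _ :=
  IsLocalRing.ResidueField (Localization.AtPrime q.asIdeal)

theorem Submodule.eq_top_of_top_le_sup_smul {R M : Type*} [CommRing R] [AddCommGroup M]
    [Module R M] {I : Ideal R} (hI : IsNilpotent I) {S : Submodule R M}
    (h : ⊤ ≤ S ⊔ I • ⊤) : S = ⊤ := by
  have key : ∀ n : ℕ, ⊤ ≤ S ⊔ I ^ n • (⊤ : Submodule R M) := by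
    intro n
    induction n with
    | zero => simp
    | succ n ih =>
      calc ⊤ ≤ S ⊔ I ^ n • ⊤ := ih
        _ ≤ S ⊔ I ^ n • (S ⊔ I • ⊤) := sup_le_sup_left (Submodule.smul_mono le_rfl h) _
        _ = S ⊔ I ^ n • S ⊔ I ^ (n + 1) • ⊤ := by
          rw [Submodule.smul_sup, pow_succ, Submodule.mul_smul, sup_assoc]
        _ ≤ S ⊔ I ^ (n + 1) • ⊤ := sup_le_sup_right (sup_le le_rfl Submodule.smul_le_right) _
  obtain ⟨k, hk⟩ := hI
  simpa [hk] using key k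

section BaseChange

variable {R A P : Type*} [CommRing R] [CommRing A] [Algebra R A] [AddCommGroup P] [Module R P]

theorem exists_finset_span_one_tmul_eq_top [Module.Finite A (A ⊗[R] P)] :
    ∃ T : Finset P, Submodule.span A (TensorProduct.mk R A P 1 '' T) = ⊤ := by
  classical
  have hspan : Submodule.span A (TensorProduct.mk R A P 1 '' Set.univ) = ⊤ := by
    rw [← Submodule.baseChange_span, Submodule.span_univ, Submodule.baseChange_top]
  obtain ⟨T', hT', hT'span⟩ := (Submodule.fg_span_iff_fg_span_finset_subset _).mp
    (hspan ▸ Module.Finite.fg_top)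
  obtain ⟨T, -, rfl⟩ := Finset.subset_set_image_iff.mp hT'
  exact ⟨T, by rw [← hspan, hT'span, Finset.coe_image]⟩

theorem algebraMap_apply_eq_zero_of_span_eq_top (g : P →ₗ[R] R) {T : Set P}
    (hT : Submodule.span A (TensorProduct.mk R A P 1 '' T) = ⊤)
    (hg : ∀ t ∈ T, algebraMap R A (g t) = 0) (x : P) : algebraMap R A (g x) = 0 := by
  let G : A ⊗[R] P →ₗ[A] A := LinearMap.liftBaseChange A (Algebra.linearMap R A ∘ₗ g)
  have hG : ∀ y, G (1 ⊗ₜ y) = algebraMap R A (g y) := fun y => by simp [G]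
  have hG0 : G = 0 := LinearMap.ext_on hT (by rintro _ ⟨t, ht, rfl⟩; simp [hG, hg t ht])
  rw [← hG, hG0, LinearMap.zero_apply]

end BaseChange

theorem Module.Finite.of_projective_of_finite_residueFieldAt {R : Type*} [CommRing R]
    [IsNoetherianRing R] (P : Type*) [AddCommGroup P] [Module R P] [Module.Projective R P]
    (h : ∀ q : PrimeSpectrum R, Module.Finite (ResidueFieldAt q) (ResidueFieldAt q ⊗[R] P)) :
    Module.Finite R P := by
  classical
  obtain ⟨s, hs⟩ := Module.projective_def.mp ‹Module.Projective R P›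
  have := (minimalPrimes.finite_of_isNoetherianRing R).fintype
  let q (p : minimalPrimes R) : PrimeSpectrum R := ⟨p, p.2.1.1⟩
  choose T hT using fun p : minimalPrimes R =>
    have := h (q p)
    exists_finset_span_one_tmul_eq_top (R := R) (A := ResidueFieldAt (q p)) (P := P)
  let J : Finset P := Finset.univ.biUnion fun p => (T p).biUnion fun t => (s t).support
  have hcoord : ∀ x, ∀ i ∉ J, s x i ∈ nilradical R := by
    intro x i hi
    rw [nilradical, Ideal.zero_eq_bot, ← Ideal.sInf_minimalPrimes, Ideal.mem_sInf]
    intro p hp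
    have : p.IsPrime := hp.1.1
    rw [← Ideal.algebraMap_residueField_eq_zero (I := p)]
    refine algebraMap_apply_eq_zero_of_span_eq_top (Finsupp.lapply i ∘ₗ s) (hT ⟨p, hp⟩) ?_ x
    intro t ht
    have : s t i = 0 := by
      by_contra hne
      exact hi (Finset.mem_biUnion.mpr ⟨⟨p, hp⟩, Finset.mem_univ _,
        Finset.mem_biUnion.mpr ⟨t, ht, Finsupp.mem_support_iff.mpr hne⟩⟩)
    simp [this]
  have hsup : ⊤ ≤ Submodule.span R (J : Set P) ⊔ nilradical R • ⊤ := by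
    intro x _
    rw [← hs x, Finsupp.linearCombination_apply, Finsupp.sum,
      ← Finset.sum_filter_add_sum_filter_not _ (· ∈ J)]
    refine Submodule.add_mem _ (Submodule.sum_mem _ fun i hi => Submodule.mem_sup_left ?_)
      (Submodule.sum_mem _ fun i hi => Submodule.mem_sup_right ?_)
    · exact Submodule.smul_mem _ _ (Submodule.subset_span (Finset.mem_filter.mp hi).2)
    · exact Submodule.smul_mem_smul (hcoord x i (Finset.mem_filter.mp hi).2) trivial
  exact ⟨⟨J, Submodule.eq_top_of_top_le_sup_smul (IsNoetherianRing.isNilpotent_nilradical R) hsup⟩⟩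

section SplitSurjection

variable {R P M : Type*} [CommRing R] [AddCommGroup P] [Module R P] [AddCommGroup M] [Module R M]
  {φ : P →ₗ[R] M} {σ : M →ₗ[R] P}

theorem LinearMap.exists_retraction_subtype_ker (hσ : φ ∘ₗ σ = LinearMap.id) :
    ∃ ρ : P →ₗ[R] LinearMap.ker φ, ρ ∘ₗ (LinearMap.ker φ).subtype = LinearMap.id :=
  ((Function.Exact.split_tfae (LinearMap.exact_subtype_ker_map φ)
    (LinearMap.ker φ).injective_subtype
    (Function.RightInverse.surjective (LinearMap.congr_fun hσ))).out 0 1).mp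
      (⟨σ, hσ⟩ : ∃ σ, φ ∘ₗ σ = LinearMap.id)

theorem Module.Finite.baseChange_ker_of_comp_eq_id (A : Type*) [CommRing A] [Algebra R A]
    [IsNoetherianRing A] (hσ : φ ∘ₗ σ = LinearMap.id)
    [Module.Finite A (LinearMap.ker (φ.baseChange A))] :
    Module.Finite A (A ⊗[R] LinearMap.ker φ) := by
  obtain ⟨ρ, hρ⟩ := LinearMap.exists_retraction_subtype_ker hσ
  let ι := (LinearMap.ker φ).subtype.baseChange A
  have hι : Function.Injective ι := by
    refine Function.LeftInverse.injective (g := ρ.baseChange A) fun z => ?_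
    rw [← LinearMap.comp_apply, ← LinearMap.baseChange_comp, hρ, LinearMap.baseChange_id,
      LinearMap.id_apply]
  have hker : ∀ z, ι z ∈ LinearMap.ker (φ.baseChange A) := fun z => by
    rw [LinearMap.mem_ker, ← LinearMap.comp_apply, ← LinearMap.baseChange_comp,
      (LinearMap.exact_subtype_ker_map φ).linearMap_comp_eq_zero, LinearMap.baseChange_zero,
      LinearMap.zero_apply]
  have := isNoetherian_of_isNoetherianRing_of_finite A (LinearMap.ker (φ.baseChange A))
  exact Module.Finite.of_injective (ι.codRestrict _ hker) fun _ _ h => hι (congrArg Subtype.val h)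

end SplitSurjection

section Coprod

variable {R N F M : Type*} [CommRing R] [AddCommGroup N] [Module R N] [AddCommGroup F]
  [Module R F] [AddCommGroup M] [Module R M]

theorem Module.Finite.ker_coprod (f : N →ₗ[R] M) (s : F →ₗ[R] M)
    [Module.Finite R (LinearMap.ker f)] [IsNoetherian R F] :
    Module.Finite R (LinearMap.ker (f.coprod s)) := by
  refine Module.Finite.iff_fg.mpr
    (Submodule.fg_of_fg_map_of_fg_inf_ker (LinearMap.snd R N F) (IsNoetherian.noetherian _) ?_)
  have : LinearMap.ker (f.coprod s) ⊓ LinearMap.ker (LinearMap.snd R N F) =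
      (LinearMap.ker f).map (LinearMap.inl R N F) := by
    ext ⟨n, x⟩
    simp only [Submodule.mem_inf, LinearMap.mem_ker, LinearMap.coprod_apply, LinearMap.snd_apply,
      Submodule.mem_map, LinearMap.inl_apply, Prod.mk.injEq]
    constructor
    · rintro ⟨h, rfl⟩
      exact ⟨n, by simpa using h, rfl, rfl⟩
    · rintro ⟨n, hn, rfl, rfl⟩
      simp [hn]
  rw [this]
  exact (Module.Finite.iff_fg.mp inferInstance).map _

theorem LinearMap.baseChange_coprod (A : Type*) [CommRing A] [Algebra R A]
    (f : N →ₗ[R] M) (s : F →ₗ[R] M) :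
    (f.coprod s).baseChange A =
      (f.baseChange A).coprod (s.baseChange A) ∘ₗ (prodRight R A A N F).toLinearMap := by
  ext <;> simp

theorem Module.Finite.ker_baseChange_coprod (A : Type*) [CommRing A] [Algebra R A]
    [IsNoetherianRing A] (f : N →ₗ[R] M) (s : F →ₗ[R] M) [Module.Finite R F]
    [Module.Finite A (LinearMap.ker (f.baseChange A))] :
    Module.Finite A (LinearMap.ker ((f.coprod s).baseChange A)) := by
  have := isNoetherian_of_isNoetherianRing_of_finite A (A ⊗[R] F)
  have := Module.Finite.ker_coprod (f.baseChange A) (s.baseChange A)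
  rw [LinearMap.baseChange_coprod, LinearMap.ker_comp]
  exact Module.Finite.equiv (LinearEquiv.ofSubmodule' _ _).symm

end Coprod

section Fredholm

variable {R N F M : Type*} [CommRing R] [AddCommGroup N] [Module R N] [AddCommGroup F]
  [Module R F] [AddCommGroup M] [Module R M]

theorem LinearMap.exists_surjective_coprod_of_finite_quotient_range (f : N →ₗ[R] M)
    [Module.Finite R (M ⧸ LinearMap.range f)] :
    ∃ (n : ℕ) (s : (Fin n → R) →ₗ[R] M), Function.Surjective (f.coprod s) := by
  obtain ⟨n, t, ht⟩ := Module.Finite.exists_fin' R (M ⧸ LinearMap.range f)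
  obtain ⟨s, hs⟩ := Module.projective_lifting_property (LinearMap.range f).mkQ t
    (Submodule.mkQ_surjective _)
  refine ⟨n, s, fun m => ?_⟩
  obtain ⟨x, hx⟩ := ht ((LinearMap.range f).mkQ m)
  obtain ⟨y, hy⟩ : m - s x ∈ LinearMap.range f := by
    rw [← Submodule.ker_mkQ (LinearMap.range f), LinearMap.mem_ker, map_sub, ← hx,
      ← LinearMap.comp_apply, hs, sub_self]
  exact ⟨(y, x), by rw [LinearMap.coprod_apply, hy, sub_add_cancel]⟩

theorem isFredholm_of_coprod_comp_eq_id (f : N →ₗ[R] M) (s : F →ₗ[R] M) [Module.Finite R F]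
    (σ : M →ₗ[R] N × F) (hσ : f.coprod s ∘ₗ σ = LinearMap.id)
    (hker : (LinearMap.ker (f.coprod s)).FG) : IsFredholm f := by
  have hσ' : ∀ m, f.coprod s (σ m) = m := LinearMap.congr_fun hσ
  refine ⟨LinearMap.fst R N F ∘ₗ σ, ⟨LinearMap.range s, ?_, ?_⟩,
    ⟨(LinearMap.ker (f.coprod s)).map (LinearMap.fst R N F), hker.map _, ?_⟩⟩
  · rw [LinearMap.range_eq_map]
    exact Module.Finite.fg_top.map s
  · rintro _ ⟨m, rfl⟩
    refine ⟨-(σ m).2, ?_⟩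
    have hm := hσ' m
    rw [LinearMap.coprod_apply] at hm
    simp only [map_neg, LinearMap.sub_apply, LinearMap.comp_apply, LinearMap.fst_apply,
      LinearMap.id_apply]
    rw [eq_sub_iff_add_eq, neg_add_eq_iff_eq_add, add_comm, hm]
  · rintro _ ⟨n, rfl⟩
    refine ⟨σ (f n) - (n, 0), ?_, by simp⟩
    rw [SetLike.mem_coe, LinearMap.mem_ker, map_sub, hσ', LinearMap.coprod_apply]
    simp

end Fredholm

/-- Over a Noetherian ring, a linear map between projective modules with finitely
generated cokernel whose fibers at all primes have finite-dimensional kernel and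
cokernel is Fredholm: no local constancy of the index need be assumed. -/
theorem isFredholm_of_pointwise_of_noetherian
    {R : Type*} [CommRing R] [IsNoetherianRing R] {N M : Type*}
    [AddCommGroup N] [Module R N] [AddCommGroup M] [Module R M]
    [Module.Projective R N] [Module.Projective R M]
    (f : N →ₗ[R] M)
    (hcoker : Module.Finite R (M ⧸ LinearMap.range f))
    (hfib : ∀ q : PrimeSpectrum R,
      FiniteDimensional (ResidueFieldAt q)
        (LinearMap.ker (f.baseChange (ResidueFieldAt q))) ∧
      FiniteDimensional (ResidueFieldAt q)
        ((ResidueFieldAt q ⊗[R] M) ⧸ LinearMap.range (f.baseChange (ResidueFieldAt q)))) :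
    IsFredholm f := by
  obtain ⟨n, s, hs⟩ := f.exists_surjective_coprod_of_finite_quotient_range
  obtain ⟨σ, hσ⟩ := Module.projective_lifting_property (f.coprod s) LinearMap.id hs
  obtain ⟨ρ, hρ⟩ := LinearMap.exists_retraction_subtype_ker hσ
  have : Module.Projective R (LinearMap.ker (f.coprod s)) := .of_split _ ρ hρ
  have : Module.Finite R (LinearMap.ker (f.coprod s)) :=
    .of_projective_of_finite_residueFieldAt _ fun q =>
      have := (hfib q).1
      have := Module.Finite.ker_baseChange_coprod (ResidueFieldAt q) f s
      .baseChange_ker_of_comp_eq_id _ hσ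
  exact isFredholm_of_coprod_comp_eq_id f s σ hσ (Module.Finite.iff_fg.mp this)
end

section
/- Let R be a commutative ring and P a projective R-module, not assumed finitely generated, such that P ⊗_R (R/𝔪) = 0 for every maximal ideal 𝔪 of R. Then P = 0. -/
/-!
Write a projective module `P` as a direct summand of a free module via coordinate functionals
`s : P → (P →₀ R)` with `x = ∑ (s x)_b • b`. Vanishing fibers mean `P = 𝔪 P` for every maximal `𝔪`,
so every linear functional on `P`, in particular every coordinate, takes values in the Jacobson
radical `J`. Substituting the expansion of `x` into its own coordinates gives
`(s x)_c = ∑ (s x)_b (s b)_c`, so the finitely generated ideal `I` spanned by the coordinates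
of `x` satisfies `I ≤ J I`; by Nakayama `I = 0`, hence `x = 0`.
-/

open TensorProduct

namespace Module

variable {R P : Type*} [CommRing R] [AddCommGroup P] [Module R P]

theorem smul_top_eq_top_of_subsingleton_quotient_tensor (I : Ideal R)
    [Subsingleton ((R ⧸ I) ⊗[R] P)] : I • (⊤ : Submodule R P) = ⊤ :=
  Submodule.Quotient.subsingleton_iff.mp <|
    (quotTensorEquivQuotSMul P I).symm.toEquiv.injective.subsingleton

theorem Dual.apply_mem_of_smul_top_eq_top {I : Ideal R}
    (hI : I • (⊤ : Submodule R P) = ⊤) (f : Dual R P) (p : P) : f p ∈ I := by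
  have hp : p ∈ (I • ⊤ : Submodule R R).comap f :=
    Submodule.smul_top_le_comap_smul_top I f (hI.ge Submodule.mem_top)
  simpa using hp

theorem Dual.apply_mem_jacobson_of_smul_top_eq_top
    (h : ∀ m : Ideal R, m.IsMaximal → m • (⊤ : Submodule R P) = ⊤) (f : Dual R P) (p : P) :
    f p ∈ (⊥ : Ideal R).jacobson :=
  Ideal.mem_sInf.mpr fun _ ⟨_, hm⟩ ↦ apply_mem_of_smul_top_eq_top (h _ hm) f p

theorem _root_.Finsupp.eq_zero_of_apply_mem_jacobson_smul_span {ι : Type*} (v : ι →₀ R)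
    (h : ∀ c, v c ∈ (⊥ : Ideal R).jacobson • Ideal.span (v.frange : Set R)) : v = 0 := by
  have hspan : Ideal.span (v.frange : Set R) = ⊥ := by
    refine Submodule.eq_bot_of_le_smul_of_le_jacobson_bot _ _ ⟨v.frange, rfl⟩ ?_ le_rfl
    refine Ideal.span_le.mpr fun r hr ↦ ?_
    obtain ⟨-, c, rfl⟩ := Finsupp.mem_frange.mp hr
    exact h c
  ext c
  by_contra hc
  exact hc <| (Submodule.mem_bot R).mp <|
    hspan ▸ Ideal.subset_span (Finsupp.mem_frange.mpr ⟨hc, c, rfl⟩)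

theorem Projective.subsingleton_of_dual_apply_mem_jacobson [Projective R P]
    (h : ∀ (f : Dual R P) (p : P), f p ∈ (⊥ : Ideal R).jacobson) : Subsingleton P := by
  obtain ⟨s, hs⟩ := projective_def'.mp ‹Projective R P›
  have hx (x : P) : Finsupp.linearCombination R id (s x) = x := LinearMap.congr_fun hs x
  refine subsingleton_of_forall_eq 0 fun x ↦ ?_
  suffices hv : s x = 0 by rw [← hx x, hv, map_zero]
  refine (s x).eq_zero_of_apply_mem_jacobson_smul_span fun c ↦ ?_
  let f : Dual R P := Finsupp.lapply c ∘ₗ s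
  have hvc : s x c = (s x).sum fun b r ↦ f b * r :=
    calc s x c = f (Finsupp.linearCombination R id (s x)) := by rw [hx]; rfl
      _ = _ := by
        rw [Finsupp.linearCombination_apply, map_finsuppSum]
        simp only [map_smul, smul_eq_mul, id, mul_comm]
  rw [hvc]
  refine Submodule.sum_mem _ fun b hb ↦ Submodule.smul_mem_smul (h f b) ?_
  exact Ideal.subset_span (Finsupp.mem_frange.mpr ⟨Finsupp.mem_support_iff.mp hb, b, rfl⟩)

end Module

/-- A projective module (not assumed finitely generated) over a commutative ring all of
whose fibers at maximal ideals vanish is zero. -/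
theorem projective_eq_zero_of_fibers_eq_zero
    (R : Type*) [CommRing R] (P : Type*) [AddCommGroup P] [Module R P]
    [Module.Projective R P]
    (h : ∀ m : Ideal R, m.IsMaximal → Subsingleton ((R ⧸ m) ⊗[R] P)) :
    Subsingleton P :=
  Module.Projective.subsingleton_of_dual_apply_mem_jacobson <|
    Module.Dual.apply_mem_jacobson_of_smul_top_eq_top fun m hm ↦
      have := h m hm
      Module.smul_top_eq_top_of_subsingleton_quotient_tensor m
end

section
/- Let K be a field. Call a K-linear functional ℓ : K((t)) → K continuous if there exists an integer n such that ℓ vanishes on t^n K[[t]]. Then the map sending g ∈ K((t)) to the functional f ↦ Res(f·g) is a K-linear bijection from K((t)) onto the space of continuous K-linear functionals on K((t)). -/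
/-!
Since `Res(t^i g)` is the coefficient of `t^(-1-i)` in `g`, the functional `f ↦ Res(f g)`
determines `g`, and it kills `t^n K[[t]]` as soon as `g ∈ t^(-n) K[[t]]`. Conversely, a
functional killing `t^n K[[t]]` only sees the truncation of `f` below degree `n`, a finite sum of
monomials, so it is determined by its values on the monomials `t^i`; it is therefore the residue
pairing with the series whose coefficient of `t^j` is `l(t^(-1-j))`, and these vanish for `j < -n`.
-/

/-- A `K`-linear functional on `K((t))` is continuous if it annihilates `t^n K[[t]]`
for some integer `n`, i.e. it kills all Laurent series whose coefficients vanish in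
degrees `< n`. -/
def IsContinuousFunctional (K : Type*) [Field K] (l : LaurentSeries K →ₗ[K] K) : Prop :=
  ∃ n : ℤ, ∀ f : LaurentSeries K, (∀ m : ℤ, m < n → f.coeff m = 0) → l f = 0

namespace HahnSeries

theorem coeff_mul_eq_zero_of_lt_add {Γ R : Type*} [AddCommMonoid Γ] [LinearOrder Γ]
    [IsOrderedCancelAddMonoid Γ] [NonUnitalNonAssocSemiring R] {f g : HahnSeries Γ R} {a b m : Γ}
    (hf : ∀ i < a, f.coeff i = 0) (hg : ∀ j < b, g.coeff j = 0) (hm : m < a + b) :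
    (f * g).coeff m = 0 := by
  rw [coeff_mul]
  refine Finset.sum_eq_zero fun ij hij => ?_
  rw [Finset.mem_antidiagonal] at hij
  rcases lt_or_ge ij.1 a with h₁ | h₁
  · rw [hf _ h₁, zero_mul]
  rcases lt_or_ge ij.2 b with h₂ | h₂
  · rw [hg _ h₂, mul_zero]
  exact absurd (hij.2.2 ▸ add_le_add h₁ h₂) hm.not_ge

theorem truncLT_eq_sum_single {Γ R : Type*} [LinearOrder Γ] [LocallyFiniteOrder Γ]
    [AddCommMonoid R] {f : HahnSeries Γ R} {a : Γ} (hf : ∀ i < a, f.coeff i = 0) (n : Γ) :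
    truncLT n f = ∑ i ∈ Finset.Ico a n, single i (f.coeff i) := by
  ext m
  rw [HahnSeries.coeff_truncLT, coeff_sum]
  by_cases hm : m ∈ Finset.Ico a n
  · rw [Finset.sum_eq_single_of_mem m hm fun i _ hi => coeff_single_of_ne hi.symm,
      coeff_single_same, if_pos (Finset.mem_Ico.mp hm).2]
  · rw [Finset.sum_eq_zero fun i hi => coeff_single_of_ne (ne_of_mem_of_not_mem hi hm).symm]
    split_ifs with hmn
    · exact hf m (lt_of_not_ge fun ham => hm (Finset.mem_Ico.mpr ⟨ham, hmn⟩))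
    · rfl

end HahnSeries

open HahnSeries

section

variable {K : Type*} [Field K]

variable (K) in
noncomputable def residuePairing : LaurentSeries K →ₗ[K] LaurentSeries K →ₗ[K] K :=
  LinearMap.mk₂ K (fun g f => (f * g).coeff (-1))
    (fun _ _ _ => by rw [mul_add, coeff_add])
    (fun c g f => by rw [← C_mul_eq_smul, mul_left_comm, C_mul_eq_smul, coeff_smul])
    (fun _ _ _ => by rw [add_mul, coeff_add])
    (fun c f g => by rw [← C_mul_eq_smul, mul_assoc, C_mul_eq_smul, coeff_smul])

theorem residuePairing_apply (g f : LaurentSeries K) :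
    residuePairing K g f = (f * g).coeff (-1) :=
  rfl

theorem residuePairing_apply_single_one (g : LaurentSeries K) (i : ℤ) :
    residuePairing K g (single i 1) = g.coeff (-1 - i) := by
  simpa [residuePairing_apply] using
    coeff_single_mul_add (r := (1 : K)) (x := g) (b := i) (a := -1 - i)

theorem residuePairing_injective : Function.Injective (residuePairing K) := by
  intro g₁ g₂ h
  ext m
  have := LinearMap.congr_fun h (single (-1 - m) 1)
  rwa [residuePairing_apply_single_one, residuePairing_apply_single_one, sub_sub_cancel] at this

theorem isContinuousFunctional_residuePairing (g : LaurentSeries K) :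
    IsContinuousFunctional K (residuePairing K g) :=
  ⟨-g.order, fun _ hf => coeff_mul_eq_zero_of_lt_add hf (fun _ => coeff_eq_zero_of_lt_order)
    (by omega : (-1 : ℤ) < -g.order + g.order)⟩

theorem apply_eq_apply_truncLT {l : LaurentSeries K →ₗ[K] K} {n n' : ℤ}
    (hl : ∀ f : LaurentSeries K, (∀ m : ℤ, m < n → f.coeff m = 0) → l f = 0) (hn : n ≤ n')
    (f : LaurentSeries K) : l f = l (truncLT n' f) := by
  rw [← sub_eq_zero, ← map_sub]
  refine hl _ fun m hm => ?_
  rw [coeff_sub, coeff_truncLT_of_lt (hm.trans_le hn), sub_self]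

theorem IsContinuousFunctional.ext {l₁ l₂ : LaurentSeries K →ₗ[K] K}
    (h₁ : IsContinuousFunctional K l₁) (h₂ : IsContinuousFunctional K l₂)
    (h : ∀ i : ℤ, l₁ (single i 1) = l₂ (single i 1)) : l₁ = l₂ := by
  obtain ⟨n₁, h₁⟩ := h₁
  obtain ⟨n₂, h₂⟩ := h₂
  have h_single (i : ℤ) (c : K) : l₁ (single i c) = l₂ (single i c) :=
    LinearMap.congr_fun (LinearMap.ext_ring (h i) :
      l₁ ∘ₗ single.linearMap i = l₂ ∘ₗ single.linearMap i) c
  ext f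
  rw [apply_eq_apply_truncLT h₁ (le_max_left n₁ n₂),
    apply_eq_apply_truncLT h₂ (le_max_right n₁ n₂),
    truncLT_eq_sum_single (fun _ => coeff_eq_zero_of_lt_order), map_sum, map_sum]
  exact Finset.sum_congr rfl fun i _ => h_single i _

theorem IsContinuousFunctional.exists_residuePairing_eq {l : LaurentSeries K →ₗ[K] K}
    (hl : IsContinuousFunctional K l) : ∃ g : LaurentSeries K, residuePairing K g = l := by
  have ⟨n, hn⟩ := hl
  have h_bdd : BddBelow (Function.support fun j : ℤ => l (single (-1 - j) 1)) := by
    refine ⟨-n, fun j hj => not_lt.mp fun hjn => hj (hn _ fun m hm => ?_)⟩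
    exact coeff_single_of_ne (by omega)
  refine ⟨ofSuppBddBelow _ h_bdd, (isContinuousFunctional_residuePairing _).ext hl fun i => ?_⟩
  rw [residuePairing_apply_single_one, coeff_ofSuppBddBelow, sub_sub_cancel]

end

/-- The residue pairing `g ↦ (f ↦ Res(f·g))` is a `K`-linear bijection from `K((t))`
onto the space of continuous `K`-linear functionals on `K((t))`. -/
theorem residue_pairing_linear_equiv_continuous_dual (K : Type*) [Field K] :
    ∃ Φ : LaurentSeries K →ₗ[K] (LaurentSeries K →ₗ[K] K),
      (∀ g f : LaurentSeries K, Φ g f = (f * g).coeff (-1)) ∧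
      Function.Injective Φ ∧
      (∀ g : LaurentSeries K, IsContinuousFunctional K (Φ g)) ∧
      (∀ l : LaurentSeries K →ₗ[K] K, IsContinuousFunctional K l →
        ∃ g : LaurentSeries K, Φ g = l) :=
  ⟨residuePairing K, residuePairing_apply, residuePairing_injective,
    isContinuousFunctional_residuePairing, fun _ hl => hl.exists_residuePairing_eq⟩
end

section
/- Let K be a field of characteristic 0. Every Laurent series h ∈ K((t)) can be written as a sum of two Wronskians, h = (f₁·g₁′ − f₁′·g₁) + (f₂·g₂′ − f₂′·g₂) with f₁, g₁, f₂, g₂ ∈ K((t)). In particular, the Lie algebra of formal vector fields f(t)·d/dt on K((t)), with bracket [f, g] = f·g′ − f′·g, is perfect. -/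
/-!
The derivation `d/dt` maps `K((t))` onto the Laurent series with zero residue: `f_{n-1} t^(n-1)` is the
derivative of `f_{n-1} t^n / n` for `n ≠ 0`. Since `1` is a constant, `W(1, ∫h) = h - h₋₁ t⁻¹`, and the
missing residue term is itself a Wronskian, `W(t, r t⁻¹) = -2r t⁻¹`.
-/

/-- The formal derivative of a Laurent series: the coefficient of `t^n` in `f'` is
`(n+1)` times the coefficient of `t^(n+1)` in `f`. -/
noncomputable def lder {K : Type*} [Field K] (f : LaurentSeries K) : LaurentSeries K where
  coeff n := (n + 1 : ℤ) • f.coeff (n + 1)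
  isPWO_support' := by
    have hmono : Monotone (fun m : ℤ => m - 1) := fun a b hab => by simpa using hab
    have h : (Function.support fun n : ℤ => (n + 1 : ℤ) • f.coeff (n + 1)) ⊆
        (fun m : ℤ => m - 1) '' (Function.support f.coeff) := by
      intro n hn
      refine ⟨n + 1, fun h0 => ?_, by ring⟩
      simp [Function.mem_support, h0] at hn
    exact (f.isPWO_support'.image_of_monotoneOn (hmono.monotoneOn _)).mono h

open HahnSeries

section

variable {K : Type*} [Field K]

@[simp]
lemma coeff_lder (f : LaurentSeries K) (n : ℤ) :
    (lder f).coeff n = (n + 1 : ℤ) • f.coeff (n + 1) := rfl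

lemma lder_single (a : ℤ) (r : K) : lder (single a r) = single (a - 1) (a • r) := by
  ext n
  rcases eq_or_ne n (a - 1) with rfl | hn
  · simp
  · have h : n + 1 ≠ a := by omega
    simp [h, hn]

lemma lder_one : lder (1 : LaurentSeries K) = 0 := by
  simpa using lder_single (0 : ℤ) (1 : K)

/-- The antiderivative with zero constant term. At `n = 0` the coefficient is `f₋₁ / 0 = 0`:
the residue `f₋₁ t⁻¹` has no antiderivative and is dropped. -/
noncomputable def lantider (f : LaurentSeries K) : LaurentSeries K where
  coeff n := f.coeff (n - 1) / (n : K)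
  isPWO_support' := by
    have hmono : Monotone (fun m : ℤ => m + 1) := fun a b hab => by simpa using hab
    refine (f.isPWO_support'.image_of_monotoneOn (hmono.monotoneOn _)).mono fun n hn => ?_
    refine ⟨n - 1, fun h0 => ?_, by ring⟩
    simp [Function.mem_support, h0] at hn

@[simp]
lemma coeff_lantider (f : LaurentSeries K) (n : ℤ) :
    (lantider f).coeff n = f.coeff (n - 1) / (n : K) := rfl

lemma lder_lantider [CharZero K] (f : LaurentSeries K) :
    lder (lantider f) = f - single (-1) (f.coeff (-1)) := by
  ext n
  rcases eq_or_ne n (-1) with rfl | hn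
  · simp
  · have hn' : ((n + 1 : ℤ) : K) ≠ 0 := Int.cast_ne_zero.mpr (by omega)
    simp only [coeff_lder, coeff_lantider, add_sub_cancel_right, coeff_sub, coeff_single, if_neg hn,
      sub_zero, zsmul_eq_mul]
    exact mul_div_cancel₀ _ hn'

noncomputable def lwronskian (f g : LaurentSeries K) : LaurentSeries K :=
  f * lder g - lder f * g

lemma lwronskian_one_left (g : LaurentSeries K) : lwronskian 1 g = lder g := by
  simp [lwronskian, lder_one]

lemma lwronskian_single_one_single_neg_one (r : K) :
    lwronskian (single 1 1) (single (-1) r) = single (-1) (-2 * r) := by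
  rw [lwronskian, lder_single, lder_single, single_mul_single, single_mul_single]
  norm_num
  rw [← single_neg, ← single_sub, ← single_neg]
  ring_nf

end

/-- Every formal Laurent series over a field of characteristic zero is the sum of two
Wronskians `f·g' − f'·g`; in particular the Lie algebra of formal vector fields
`f(t)·d/dt`, whose bracket is the Wronskian, is perfect. -/
theorem laurentSeries_eq_sum_of_two_wronskians (K : Type*) [Field K] [CharZero K]
    (h : LaurentSeries K) :
    ∃ f₁ g₁ f₂ g₂ : LaurentSeries K,
      h = (f₁ * lder g₁ - lder f₁ * g₁) + (f₂ * lder g₂ - lder f₂ * g₂) := by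
  refine ⟨1, lantider h, single 1 1, single (-1) (-(h.coeff (-1) / 2)), ?_⟩
  change h = lwronskian 1 (lantider h) + lwronskian (single 1 1) (single (-1) (-(h.coeff (-1) / 2)))
  rw [lwronskian_one_left, lder_lantider, lwronskian_single_one_single_neg_one,
    show (-2 : K) * -(h.coeff (-1) / 2) = h.coeff (-1) by ring, sub_add_cancel]
end

section
/- Let K be a field of characteristic 0, θ : K → K a derivation, and θ̃ : K((t)) → K((t)) the derivation obtained by applying θ to each coefficient (so θ̃(t) = 0). Let V be a finite-dimensional K((t))-vector space with a connection D, and let V = V₁ ⊕ V₂ be a decomposition into D-stable K((t))-subspaces such that there is no nonzero K((t))-linear map φ : V₁ → V₂ with φ ∘ D = D ∘ φ and no nonzero K((t))-linear map φ : V₂ → V₁ with φ ∘ D = D ∘ φ. Let E : V → V be an additive map satisfying E(f·v) = θ̃(f)·v + f·E(v) for all f ∈ K((t)), v ∈ V, and commuting with D, i.e., E ∘ D = D ∘ E. Then E(V₁) ⊆ V₁ and E(V₂) ⊆ V₂. -/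
/-- The coefficientwise extension of an additive map `θ : K → K` to a map
`K((t)) → K((t))` (so in particular `θ̃(t) = 0`). -/
noncomputable def coeffMap {K : Type*} [Field K] (θ : K →+ K) (f : LaurentSeries K) :
    LaurentSeries K where
  coeff n := θ (f.coeff n)
  isPWO_support' := f.isPWO_support'.mono (fun n hn => by
    simp only [Function.mem_support] at hn ⊢
    intro h0
    exact hn (by simp [h0]))

/-! Let `π` be the projection onto `V₂` along `V₁`; it commutes with `D` because both summands
are `D`-stable. On `V₁` the map `v ↦ π (E v)` is `K((t))`-linear, since the defect `θ̃(f) • v` of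
the Leibniz rule lies in `V₁ = ker π`, and it is horizontal because `E` commutes with `D`. So it
vanishes, i.e. `E (V₁) ⊆ V₁`; symmetrically for `V₂`. -/

namespace Submodule

variable {R V : Type*} [Ring R] [AddCommGroup V] [Module R V] {p q : Submodule R V}

theorem projection_map_eq_map_projection (hpq : IsCompl p q) (D : V →+ V)
    (hp : ∀ v ∈ p, D v ∈ p) (hq : ∀ v ∈ q, D v ∈ q) (x : V) :
    p.projection q hpq (D x) = D (p.projection q hpq x) := by
  conv_lhs => rw [← projection_add_projection_eq_self hpq x]
  rw [map_add, map_add, projection_apply_of_mem_left hpq (hp _ (projection_apply_mem _ _)),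
    projection_apply_of_mem_right hpq (hq _ (projection_apply_mem _ _)), add_zero]

noncomputable def leibnizOffDiagonal (hpq : IsCompl p q) (E : V →+ V) (δ : R → R)
    (hE : ∀ (f : R) (v : V), E (f • v) = δ f • v + f • E v) : p →ₗ[R] q where
  toFun v := q.projectionOnto p hpq.symm (E v)
  map_add' u v := by simp only [coe_add, map_add]
  map_smul' f v := by
    simp only [SetLike.val_smul, hE, map_add, map_smul,
      projectionOnto_apply_of_mem_right hpq.symm v.2, smul_zero, zero_add, RingHom.id_apply]

theorem mapsTo_of_forall_horizontal_eq_zero (hpq : IsCompl p q) (D E : V →+ V)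
    (hDp : ∀ v ∈ p, D v ∈ p) (hDq : ∀ v ∈ q, D v ∈ q) (δ : R → R)
    (hE : ∀ (f : R) (v : V), E (f • v) = δ f • v + f • E v) (hcomm : ∀ v, E (D v) = D (E v))
    (hhor : ∀ φ : p →ₗ[R] q, (∀ v : p, (φ ⟨D v, hDp v v.2⟩ : V) = D (φ v)) → φ = 0) :
    ∀ v ∈ p, E v ∈ p := by
  have hφ : leibnizOffDiagonal hpq E δ hE = 0 := hhor _ fun v => by
    simp only [leibnizOffDiagonal, LinearMap.coe_mk, AddHom.coe_mk, coe_projectionOnto_apply,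
      hcomm, projection_map_eq_map_projection hpq.symm D hDq hDp]
  intro v hv
  simpa [leibnizOffDiagonal] using LinearMap.congr_fun hφ ⟨v, hv⟩

end Submodule

theorem horizontal_decomposition_stable_general
    (K : Type*) [Field K] (θ : K →+ K)
    (V : Type*) [AddCommGroup V] [Module (LaurentSeries K) V]
    [Module K V]
    (D : V →ₗ[K] V)
    (V₁ V₂ : Submodule (LaurentSeries K) V) (hcompl : IsCompl V₁ V₂)
    (hV₁ : ∀ v ∈ V₁, D v ∈ V₁) (hV₂ : ∀ v ∈ V₂, D v ∈ V₂)
    (hhor₁ : ∀ φ : V₁ →ₗ[LaurentSeries K] V₂,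
      (∀ v : V₁, (↑(φ ⟨D ↑v, hV₁ ↑v v.2⟩) : V) = D ↑(φ v)) → φ = 0)
    (hhor₂ : ∀ φ : V₂ →ₗ[LaurentSeries K] V₁,
      (∀ v : V₂, (↑(φ ⟨D ↑v, hV₂ ↑v v.2⟩) : V) = D ↑(φ v)) → φ = 0)
    (E : V → V)
    (hEadd : ∀ u v : V, E (u + v) = E u + E v)
    (hELeib : ∀ (f : LaurentSeries K) (v : V), E (f • v) = coeffMap θ f • v + f • E v)
    (hcomm : ∀ v : V, E (D v) = D (E v)) :
    (∀ v ∈ V₁, E v ∈ V₁) ∧ (∀ v ∈ V₂, E v ∈ V₂) :=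
  ⟨Submodule.mapsTo_of_forall_horizontal_eq_zero hcompl D.toAddMonoidHom (.mk' E hEadd)
      hV₁ hV₂ _ hELeib hcomm hhor₁,
    Submodule.mapsTo_of_forall_horizontal_eq_zero hcompl.symm D.toAddMonoidHom (.mk' E hEadd)
      hV₂ hV₁ _ hELeib hcomm hhor₂⟩

/-- If `V = V₁ ⊕ V₂` is a `D`-stable decomposition of a connection `(V, D)` over
`K((t))` with no nonzero horizontal maps between the summands, then any additive map
`E` which is a `θ̃`-derivation compatible with the module structure and commutes
with `D` preserves both summands. -/
theorem horizontal_decomposition_stable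
    (K : Type*) [Field K] [CharZero K] (θ : K →+ K)
    (hθ : ∀ a b : K, θ (a * b) = a * θ b + θ a * b)
    (V : Type*) [AddCommGroup V] [Module (LaurentSeries K) V]
    [Module.Finite (LaurentSeries K) V]
    [Module K V] [IsScalarTower K (LaurentSeries K) V]
    (D : V →ₗ[K] V)
    (hD : ∀ (f : LaurentSeries K) (v : V), D (f • v) = lder f • v + f • D v)
    (V₁ V₂ : Submodule (LaurentSeries K) V) (hcompl : IsCompl V₁ V₂)
    (hV₁ : ∀ v ∈ V₁, D v ∈ V₁) (hV₂ : ∀ v ∈ V₂, D v ∈ V₂)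
    (hhor₁ : ∀ φ : V₁ →ₗ[LaurentSeries K] V₂,
      (∀ v : V₁, (↑(φ ⟨D ↑v, hV₁ ↑v v.2⟩) : V) = D ↑(φ v)) → φ = 0)
    (hhor₂ : ∀ φ : V₂ →ₗ[LaurentSeries K] V₁,
      (∀ v : V₂, (↑(φ ⟨D ↑v, hV₂ ↑v v.2⟩) : V) = D ↑(φ v)) → φ = 0)
    (E : V → V)
    (hEadd : ∀ u v : V, E (u + v) = E u + E v)
    (hELeib : ∀ (f : LaurentSeries K) (v : V), E (f • v) = coeffMap θ f • v + f • E v)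
    (hcomm : ∀ v : V, E (D v) = D (E v)) :
    (∀ v ∈ V₁, E v ∈ V₁) ∧ (∀ v ∈ V₂, E v ∈ V₂) :=
  horizontal_decomposition_stable_general K θ V D V₁ V₂ hcompl hV₁ hV₂ hhor₁ hhor₂ E hEadd hELeib
    hcomm
end

section
/- Let K be a field of characteristic 0, n ≥ 1, and a₀, …, a_{n−1} ∈ K((t)). Let θ : K((t)) → K((t)) be the K-linear map f ↦ t·f′, and define the K-linear operator A := (−1)^{n−1}·θ^n + Σ_{i=0}^{n−1} (−1)^i·θ^i ∘ m_{a_i}, where m_{a_i} denotes multiplication by a_i. Set r := max(0, max{−ord(a_i) : 0 ≤ i ≤ n−1, a_i ≠ 0}), where ord denotes the t-adic order of a nonzero Laurent series (the smallest exponent with nonzero coefficient), with r := 0 if all a_i vanish. Then A(t^j·K[[t]]) ⊆ t^{j−r}·K[[t]] for every integer j, and for all but finitely many integers j the coefficient of t^{j−r} in A(t^j) is nonzero. -/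
/-!
`θ = t d/dt` acts diagonally, `θ^k t^m = m^k t^m`, so the coefficient of `t^m` in `A h` is
`(-1)^(n-1) m^n h_m + Σ_i (-1)^i m^i (a_i h)_m`. Since `ord a_i ≥ -r`, this vanishes for
`m < j - r` when `h ∈ t^j K[[t]]`. For `h = t^j` and `m = j - r` it is a polynomial in `j - r`
whose coefficients are `(-1)^i` times the `t^(-r)`-coefficients of the `a_i`, plus
`(-1)^(n-1) X^n` when `r = 0`; by the maximality defining `r` one of them is nonzero, and a
nonzero polynomial has finitely many integer roots in characteristic `0`.
-/

open scoped Classical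

open Polynomial

namespace LaurentSeries

variable {K : Type*} [Field K]

theorem coeff_single_one_mul_lder (x : LaurentSeries K) (m : ℤ) :
    (HahnSeries.single (1 : ℤ) (1 : K) * lder x).coeff m = m * x.coeff m := by
  obtain ⟨k, rfl⟩ : ∃ k, m = k + 1 := ⟨m - 1, by ring⟩
  rw [HahnSeries.coeff_single_mul_add, one_mul]
  exact zsmul_eq_mul _ _

theorem coeff_iterate_of_coeff_eq_mul {θ : LaurentSeries K → LaurentSeries K}
    (hθ : ∀ x m, (θ x).coeff m = m * x.coeff m) (k : ℕ) (x : LaurentSeries K) (m : ℤ) :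
    (θ^[k] x).coeff m = m ^ k * x.coeff m := by
  induction k generalizing x with
  | zero => simp
  | succ k ih => rw [Function.iterate_succ_apply, ih, hθ, pow_succ, mul_assoc]

end LaurentSeries

noncomputable section CyclicOperator

variable {K : Type*} [Field K] {n : ℕ} (a : Fin n → LaurentSeries K)

def cyclicOperator (θ : LaurentSeries K → LaurentSeries K) (h : LaurentSeries K) :
    LaurentSeries K :=
  ((-1 : ℤ) ^ (n - 1)) • θ^[n] h + ∑ i : Fin n, ((-1 : ℤ) ^ (i : ℕ)) • θ^[(i : ℕ)] (a i * h)

def irregularity : ℤ :=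
  Finset.fold max 0 (fun i => -(a i).order) (Finset.univ.filter fun i => a i ≠ 0)

def indicialPolynomial (s : ℤ) : K[X] :=
  C ((-1) ^ (n - 1) * (1 : LaurentSeries K).coeff s) * X ^ n +
    ∑ i : Fin n, C ((-1) ^ (i : ℕ) * (a i).coeff s) * X ^ (i : ℕ)

theorem irregularity_nonneg : 0 ≤ irregularity a :=
  (Finset.le_fold_max _).2 (Or.inl le_rfl)

theorem neg_order_le_irregularity {i : Fin n} (hi : a i ≠ 0) : -(a i).order ≤ irregularity a :=
  (Finset.le_fold_max _).2 (Or.inr ⟨i, by simpa using hi, le_rfl⟩)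

theorem neg_irregularity_le_orderTop (i : Fin n) :
    ((-irregularity a : ℤ) : WithTop ℤ) ≤ (a i).orderTop := by
  rcases eq_or_ne (a i) 0 with hi | hi
  · simp [hi]
  · rw [← HahnSeries.order_eq_orderTop_of_ne_zero hi, WithTop.coe_le_coe, neg_le]
    exact neg_order_le_irregularity a hi

theorem one_coeff_ne_zero_or_exists_coeff_ne_zero :
    (1 : LaurentSeries K).coeff (-irregularity a) ≠ 0 ∨
      ∃ i, (a i).coeff (-irregularity a) ≠ 0 := by
  rcases (Finset.lt_fold_max _).1 (sub_one_lt (irregularity a)) with hr | ⟨i, hi, hlt⟩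
  · left
    simp [show irregularity a = 0 by linarith [irregularity_nonneg a], HahnSeries.coeff_one]
  · right
    have hai : a i ≠ 0 := (Finset.mem_filter.1 hi).2
    have hord : -irregularity a = (a i).order := by
      linarith [neg_order_le_irregularity a hai]
    exact ⟨i, hord ▸ mt HahnSeries.coeff_order_eq_zero.1 hai⟩

theorem coeff_indicialPolynomial_self (s : ℤ) :
    (indicialPolynomial a s).coeff n = (-1) ^ (n - 1) * (1 : LaurentSeries K).coeff s := by
  rw [indicialPolynomial, coeff_add, coeff_C_mul_X_pow, if_pos rfl, finsetSum_coeff,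
    Finset.sum_eq_zero fun i _ => by rw [coeff_C_mul_X_pow, if_neg i.is_lt.ne'], add_zero]

theorem coeff_indicialPolynomial_fin (s : ℤ) (i : Fin n) :
    (indicialPolynomial a s).coeff i = (-1) ^ (i : ℕ) * (a i).coeff s := by
  rw [indicialPolynomial, coeff_add, coeff_C_mul_X_pow, if_neg i.is_lt.ne, zero_add,
    finsetSum_coeff]
  simp only [coeff_C_mul_X_pow, Fin.val_inj]
  simp

theorem indicialPolynomial_ne_zero {s : ℤ}
    (hs : (1 : LaurentSeries K).coeff s ≠ 0 ∨ ∃ i, (a i).coeff s ≠ 0) :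
    indicialPolynomial a s ≠ 0 := by
  rcases hs with hs | ⟨i, hi⟩
  · refine ne_of_apply_ne (coeff · n) ?_
    simpa [coeff_indicialPolynomial_self] using hs
  · refine ne_of_apply_ne (coeff · i) ?_
    simpa [coeff_indicialPolynomial_fin] using hi

variable {θ : LaurentSeries K → LaurentSeries K} (hθ : ∀ x m, (θ x).coeff m = m * x.coeff m)
include hθ

theorem coeff_cyclicOperator (h : LaurentSeries K) (m : ℤ) :
    (cyclicOperator a θ h).coeff m = (-1) ^ (n - 1) * (m : K) ^ n * h.coeff m +
      ∑ i : Fin n, (-1) ^ (i : ℕ) * (m : K) ^ (i : ℕ) * (a i * h).coeff m := by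
  have hzsmul (k : ℤ) (x : LaurentSeries K) : (k • x).coeff m = k * x.coeff m := by
    rw [← zsmul_eq_mul]; rfl
  simp only [cyclicOperator, HahnSeries.coeff_add, HahnSeries.coeff_sum, hzsmul,
    LaurentSeries.coeff_iterate_of_coeff_eq_mul hθ, mul_assoc]
  push_cast
  rfl

theorem coeff_cyclicOperator_eq_zero_of_lt (j : ℤ) (h : LaurentSeries K)
    (hh : (j : WithTop ℤ) ≤ h.orderTop) (m : ℤ) (hm : m < j - irregularity a) :
    (cyclicOperator a θ h).coeff m = 0 := by
  have hr := irregularity_nonneg a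
  have hcoeff_h : h.coeff m = 0 :=
    HahnSeries.coeff_eq_zero_of_lt_orderTop ((WithTop.coe_lt_coe.2 (by omega)).trans_le hh)
  have hcoeff_mul (i : Fin n) : (a i * h).coeff m = 0 := by
    have hle : ((-irregularity a + j : ℤ) : WithTop ℤ) ≤ (a i * h).orderTop := by
      rw [HahnSeries.orderTop_mul, WithTop.coe_add]
      exact add_le_add (neg_irregularity_le_orderTop a i) hh
    exact HahnSeries.coeff_eq_zero_of_lt_orderTop ((WithTop.coe_lt_coe.2 (by omega)).trans_le hle)
  simp [coeff_cyclicOperator a hθ, hcoeff_h, hcoeff_mul]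

theorem coeff_cyclicOperator_single (s j : ℤ) :
    (cyclicOperator a θ (HahnSeries.single j 1)).coeff (s + j) =
      (indicialPolynomial a s).eval ((s + j : ℤ) : K) := by
  have hsingle : (HahnSeries.single j (1 : K)).coeff (s + j) = (1 : LaurentSeries K).coeff s := by
    simpa using HahnSeries.coeff_mul_single_add (x := (1 : LaurentSeries K)) (r := 1) (a := s)
  simp only [coeff_cyclicOperator a hθ, indicialPolynomial, eval_add, eval_finsetSum, eval_mul,
    eval_C, eval_pow, eval_X, HahnSeries.coeff_mul_single_add, mul_one, hsingle]
  congr 1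
  · ring
  · exact Finset.sum_congr rfl fun _ _ => by ring

end CyclicOperator

theorem Polynomial.finite_setOf_eval_intCast_add_eq_zero {K : Type*} [Field K] [CharZero K]
    {P : K[X]} (hP : P ≠ 0) (s : ℤ) : {j : ℤ | P.eval ((s + j : ℤ) : K) = 0}.Finite :=
  (finite_setOfPred_isRoot hP).preimage
    ((Int.cast_injective.comp (add_right_injective s)).injOn)

theorem cyclic_operator_shifts_filtration_by_irregularity_general
    (K : Type*) [Field K] [CharZero K] (n : ℕ)
    (a : Fin n → LaurentSeries K)
    (θ : LaurentSeries K → LaurentSeries K)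
    (hθ : ∀ x : LaurentSeries K,
      θ x = (HahnSeries.single (1 : ℤ) (1 : K) : LaurentSeries K) * lder x)
    (A : LaurentSeries K → LaurentSeries K)
    (hA : ∀ h : LaurentSeries K,
      A h = ((-1 : ℤ) ^ (n - 1)) • θ^[n] h +
        ∑ i : Fin n, ((-1 : ℤ) ^ (i : ℕ)) • θ^[(i : ℕ)] (a i * h))
    (r : ℤ)
    (hr : r = Finset.fold max 0 (fun i => -(a i).order)
      (Finset.univ.filter fun i => a i ≠ 0)) :
    (∀ (j : ℤ) (h : LaurentSeries K), (∀ m : ℤ, m < j → h.coeff m = 0) →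
      ∀ m : ℤ, m < j - r → (A h).coeff m = 0) ∧
    {j : ℤ | (A (HahnSeries.single j (1 : K))).coeff (j - r) = 0}.Finite := by
  obtain rfl : A = cyclicOperator a θ := funext hA
  obtain rfl : r = irregularity a := hr
  have hθ_coeff (x : LaurentSeries K) (m : ℤ) : (θ x).coeff m = m * x.coeff m := by
    rw [hθ, LaurentSeries.coeff_single_one_mul_lder]
  refine ⟨fun j h hh => coeff_cyclicOperator_eq_zero_of_lt a hθ_coeff j h
    (HahnSeries.le_orderTop_iff_forall.2 fun m hm => hh m (WithTop.coe_lt_coe.1 hm)), ?_⟩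
  refine (Polynomial.finite_setOf_eval_intCast_add_eq_zero (indicialPolynomial_ne_zero a
    (one_coeff_ne_zero_or_exists_coeff_ne_zero a)) (-irregularity a)).subset fun j hj => ?_
  rw [Set.mem_ofPred_eq, ← coeff_cyclicOperator_single a hθ_coeff, neg_add_eq_sub]
  exact hj

/-- The differential operator `A = (−1)^{n−1} θ^n + Σ_i (−1)^i θ^i ∘ m_{a_i}` attached
to a cyclic vector, where `θ = t·d/dt`, shifts the lattice filtration `t^j K[[t]]` by
the irregularity `r = max(0, max_i −ord(a_i))`, and the induced maps on the associated
graded pieces `t^j K / t^{j−r} K` are nonzero for all but finitely many `j`. -/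
theorem cyclic_operator_shifts_filtration_by_irregularity
    (K : Type*) [Field K] [CharZero K] (n : ℕ) (hn : 1 ≤ n)
    (a : Fin n → LaurentSeries K)
    (θ : LaurentSeries K → LaurentSeries K)
    (hθ : ∀ x : LaurentSeries K,
      θ x = (HahnSeries.single (1 : ℤ) (1 : K) : LaurentSeries K) * lder x)
    (A : LaurentSeries K → LaurentSeries K)
    (hA : ∀ h : LaurentSeries K,
      A h = ((-1 : ℤ) ^ (n - 1)) • θ^[n] h +
        ∑ i : Fin n, ((-1 : ℤ) ^ (i : ℕ)) • θ^[(i : ℕ)] (a i * h))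
    (r : ℤ)
    (hr : r = Finset.fold max 0 (fun i => -(a i).order)
      (Finset.univ.filter fun i => a i ≠ 0)) :
    (∀ (j : ℤ) (h : LaurentSeries K), (∀ m : ℤ, m < j → h.coeff m = 0) →
      ∀ m : ℤ, m < j - r → (A h).coeff m = 0) ∧
    {j : ℤ | (A (HahnSeries.single j (1 : K))).coeff (j - r) = 0}.Finite :=
  cyclic_operator_shifts_filtration_by_irregularity_general K n a θ hθ A hA r hr
end
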